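/- For any κ ≥ 1 and any E ≥ 0, the function x ↦ g((κ−1)·(g⁻¹(x)+1) + κ·E) is increasing and convex on [0,∞). -/

import Mathlib

open Real Set Filter

noncomputable def g (E : ℝ) : ℝ := (E + 1) * Real.log (E + 1) - E * Real.log E

noncomputable def ginv : ℝ → ℝ := Function.invFunOn g (Set.Ici 0)

/-!
With `t = g⁻¹ x`, `s = (κ - 1) (t + 1) + κ E` and `L = g'`, `L t = log (1 + 1/t)`, the chain
rule gives the derivative `(κ - 1) L(s) / L(t)` in `x`. As `t` increases with `x`, convexity
reduces to this ratio increasing in `t`; since `L' t = -1 / (t (t + 1))`, that is the inequality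
`(κ - 1) t (t + 1) L(t) ≤ s (s + 1) L(s)`, which follows from `t L(t) ≤ 1 ≤ (s + 1) L(s)` and
`(κ - 1) (t + 1) ≤ s`.
-/

noncomputable def gDeriv (t : ℝ) : ℝ := log (t + 1) - log t

lemma gDeriv_eq_log_div {t : ℝ} (ht : 0 < t) : gDeriv t = log ((t + 1) / t) :=
  (log_div (by linarith) ht.ne').symm

lemma gDeriv_pos {t : ℝ} (ht : 0 < t) : 0 < gDeriv t :=
  sub_pos.2 (log_lt_log ht (by linarith))

lemma mul_gDeriv_le_one {t : ℝ} (ht : 0 < t) : t * gDeriv t ≤ 1 := by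
  have h := log_le_sub_one_of_pos (show 0 < (t + 1) / t by positivity)
  rw [← gDeriv_eq_log_div ht, add_div, div_self ht.ne', add_sub_cancel_left] at h
  calc t * gDeriv t ≤ t * (1 / t) := by gcongr
    _ = 1 := mul_one_div_cancel ht.ne'

lemma one_le_add_one_mul_gDeriv {t : ℝ} (ht : 0 < t) : 1 ≤ (t + 1) * gDeriv t := by
  have h := one_sub_inv_le_log_of_pos (show 0 < (t + 1) / t by positivity)
  rw [← gDeriv_eq_log_div ht, inv_div] at h
  have h1 : 1 - t / (t + 1) = 1 / (t + 1) := by field_simp; ring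
  rw [h1] at h
  calc 1 = (t + 1) * (1 / (t + 1)) := (mul_one_div_cancel (by linarith)).symm
    _ ≤ (t + 1) * gDeriv t := mul_le_mul_of_nonneg_left h (by linarith)

lemma hasDerivAt_gDeriv {t : ℝ} (ht : 0 < t) :
    HasDerivAt gDeriv (-(t * (t + 1))⁻¹) t := by
  have h : HasDerivAt gDeriv ((t + 1)⁻¹ - t⁻¹) t :=
    (hasDerivAt_log (by linarith)).comp_add_const t 1 |>.sub (hasDerivAt_log ht.ne')
  convert h using 1
  field_simp
  ring

lemma g_zero : g 0 = 0 := by simp [g]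

lemma g_eq_log_add_mul_gDeriv (t : ℝ) : g t = log (t + 1) + t * gDeriv t := by
  unfold g gDeriv
  ring

lemma continuous_g : Continuous g :=
  (continuous_mul_log.comp (continuous_add_const 1)).sub continuous_mul_log

lemma hasDerivAt_g {t : ℝ} (ht : 0 < t) : HasDerivAt g (gDeriv t) t := by
  have h : HasDerivAt g (log (t + 1) + 1 - (log t + 1)) t :=
    ((hasDerivAt_mul_log (by linarith)).comp_add_const t 1).sub (hasDerivAt_mul_log ht.ne')
  convert h using 1
  rw [gDeriv]
  ring

lemma strictMonoOn_g : StrictMonoOn g (Ici 0) :=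
  strictMonoOn_of_deriv_pos (convex_Ici 0) continuous_g.continuousOn fun t ht => by
    rw [interior_Ici] at ht
    rw [(hasDerivAt_g ht).deriv]
    exact gDeriv_pos ht

lemma tendsto_g_atTop : Tendsto g atTop atTop := by
  refine tendsto_atTop_mono' atTop ?_
    (tendsto_log_atTop.comp (tendsto_atTop_add_const_right _ 1 tendsto_id))
  filter_upwards [eventually_gt_atTop 0] with t ht
  rw [Function.comp_apply, id, g_eq_log_add_mul_gDeriv]
  exact le_add_of_nonneg_right (mul_pos ht (gDeriv_pos ht)).le

lemma surjOn_g : SurjOn g (Ici 0) (Ici 0) := by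
  have h := intermediate_value_Ici (a := 0) continuous_g.continuousOn tendsto_g_atTop
  rwa [g_zero] at h

lemma mapsTo_ginv : MapsTo ginv (Ici 0) (Ici 0) := surjOn_g.mapsTo_invFunOn

lemma g_ginv {x : ℝ} (hx : 0 ≤ x) : g (ginv x) = x := surjOn_g.rightInvOn_invFunOn hx

lemma ginv_g {t : ℝ} (ht : 0 ≤ t) : ginv (g t) = t := strictMonoOn_g.injOn.leftInvOn_invFunOn ht

lemma ginv_zero : ginv 0 = 0 := by
  simpa only [g_zero] using ginv_g le_rfl

lemma ginv_pos {x : ℝ} (hx : 0 < x) : 0 < ginv x := by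
  refine (mapsTo_ginv hx.le).lt_of_ne fun h => hx.ne' ?_
  rw [← g_ginv hx.le, ← h, g_zero]

lemma monotoneOn_ginv : MonotoneOn ginv (Ici 0) := fun x hx y hy hxy =>
  (strictMonoOn_g.le_iff_le (mapsTo_ginv hx) (mapsTo_ginv hy)).1 <| by
    rwa [g_ginv hx, g_ginv hy]

lemma mapsTo_g : MapsTo g (Ici 0) (Ici 0) := fun _ ht =>
  g_zero ▸ strictMonoOn_g.monotoneOn self_mem_Ici ht ht

lemma image_ginv_Ici : ginv '' Ici 0 = Ici 0 :=
  mapsTo_ginv.image_subset.antisymm fun t ht => ⟨g t, mapsTo_g ht, ginv_g ht⟩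

lemma continuousOn_ginv : ContinuousOn ginv (Ici 0) := by
  intro x hx
  rcases (mem_Ici.1 hx).eq_or_lt with rfl | hx
  · refine continuousWithinAt_right_of_monotoneOn_of_image_mem_nhdsWithin (s := Ici 0)
      monotoneOn_ginv self_mem_nhdsWithin ?_
    rw [image_ginv_Ici, ginv_zero]
    exact self_mem_nhdsWithin
  · refine (continuousAt_of_monotoneOn_of_image_mem_nhds monotoneOn_ginv (Ici_mem_nhds hx) ?_)
      |>.continuousWithinAt
    rw [image_ginv_Ici]
    exact Ici_mem_nhds (ginv_pos hx)

lemma hasDerivAt_ginv {x : ℝ} (hx : 0 < x) : HasDerivAt ginv (gDeriv (ginv x))⁻¹ x :=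
  (hasDerivAt_g (ginv_pos hx)).of_local_left_inverse
    (continuousOn_ginv.continuousAt (Ici_mem_nhds hx)) (gDeriv_pos (ginv_pos hx)).ne'
    ((eventually_gt_nhds hx).mono fun _ hy => g_ginv hy.le)

lemma convexOn_comp_ginv {h h' : ℝ → ℝ} (hcont : ContinuousOn h (Ici 0))
    (hderiv : ∀ t, 0 < t → HasDerivAt h (h' t) t)
    (hmono : MonotoneOn (fun t => h' t / gDeriv t) (Ioi 0)) :
    ConvexOn ℝ (Ici 0) (h ∘ ginv) := by
  have hcomp : ∀ x, 0 < x → HasDerivAt (h ∘ ginv) (h' (ginv x) / gDeriv (ginv x)) x :=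
    fun x hx => (hderiv _ (ginv_pos hx)).comp x (hasDerivAt_ginv hx)
  refine MonotoneOn.convexOn_of_deriv (convex_Ici 0) (hcont.comp continuousOn_ginv mapsTo_ginv)
    ?_ ?_ <;> rw [interior_Ici]
  · exact fun x hx => (hcomp x hx).differentiableAt.differentiableWithinAt
  · intro x hx y hy hxy
    rw [(hcomp x hx).deriv, (hcomp y hy).deriv]
    exact hmono (ginv_pos hx) (ginv_pos hy)
      (monotoneOn_ginv (mem_Ici.2 hx.le) (mem_Ici.2 hy.le) hxy)

lemma hasDerivAt_affine (a c t : ℝ) : HasDerivAt (fun t => a * (t + 1) + c) a t := by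
  simpa using (((hasDerivAt_id t).add_const 1).const_mul a).add_const c

lemma hasDerivAt_g_affine {a c t : ℝ} (hs : 0 < a * (t + 1) + c) :
    HasDerivAt (fun t => g (a * (t + 1) + c)) (gDeriv (a * (t + 1) + c) * a) t :=
  (hasDerivAt_g hs).comp (h := fun t => a * (t + 1) + c) t (hasDerivAt_affine a c t)

lemma mul_mul_gDeriv_le {a s t : ℝ} (ha : 0 ≤ a) (ht : 0 < t) (hs : 0 < s)
    (hats : a * (t + 1) ≤ s) : a * (t * (t + 1) * gDeriv t) ≤ s * (s + 1) * gDeriv s :=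
  calc a * (t * (t + 1) * gDeriv t) = a * (t + 1) * (t * gDeriv t) := by ring
    _ ≤ a * (t + 1) * 1 := by gcongr; exact mul_gDeriv_le_one ht
    _ ≤ s * ((s + 1) * gDeriv s) := by
      rw [mul_one]; exact hats.trans (le_mul_of_one_le_right hs.le (one_le_add_one_mul_gDeriv hs))
    _ = s * (s + 1) * gDeriv s := by ring

lemma monotoneOn_gDeriv_affine_div_gDeriv {a c : ℝ} (ha : 0 < a) (hc : 0 ≤ c) :
    MonotoneOn (fun t => gDeriv (a * (t + 1) + c) * a / gDeriv t) (Ioi 0) := by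
  have hderiv : ∀ t, 0 < t → HasDerivAt (fun t => gDeriv (a * (t + 1) + c) * a / gDeriv t)
      ((-((a * (t + 1) + c) * (a * (t + 1) + c + 1))⁻¹ * a * a * gDeriv t -
        gDeriv (a * (t + 1) + c) * a * -(t * (t + 1))⁻¹) / gDeriv t ^ 2) t := by
    intro t ht
    have hs : 0 < a * (t + 1) + c := by positivity
    exact (((hasDerivAt_gDeriv hs).comp t (hasDerivAt_affine a c t)).mul_const a).div
      (hasDerivAt_gDeriv ht) (gDeriv_pos ht).ne'
  refine monotoneOn_of_deriv_nonneg (convex_Ioi 0)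
    (fun t ht => (hderiv t ht).continuousAt.continuousWithinAt) ?_ ?_ <;> rw [interior_Ioi]
  · exact fun t ht => (hderiv t ht).differentiableAt.differentiableWithinAt
  · intro t (ht : 0 < t)
    rw [(hderiv t ht).deriv]
    set s := a * (t + 1) + c
    have hs : 0 < s := by positivity
    have key := mul_mul_gDeriv_le ha.le ht hs (by linarith)
    have hratio : a * gDeriv t / (s * (s + 1)) ≤ gDeriv s / (t * (t + 1)) := by
      rw [div_le_div_iff₀ (by positivity) (by positivity)]
      linarith
    refine div_nonneg ?_ (sq_nonneg _)
    calc (0 : ℝ) ≤ a * (gDeriv s / (t * (t + 1)) - a * gDeriv t / (s * (s + 1))) :=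
          mul_nonneg ha.le (sub_nonneg.2 hratio)
      _ = _ := by ring

theorem contravariant_thermal_entropy_monotone_convex (κ E : ℝ) (hκ : 1 ≤ κ) (hE : 0 ≤ E) :
    MonotoneOn (fun x => g ((κ - 1) * (ginv x + 1) + κ * E)) (Set.Ici 0) ∧
      ConvexOn ℝ (Set.Ici 0) (fun x => g ((κ - 1) * (ginv x + 1) + κ * E)) := by
  have ha : 0 ≤ κ - 1 := by linarith
  have hc : 0 ≤ κ * E := by positivity
  have hmono : MonotoneOn (fun t => g ((κ - 1) * (t + 1) + κ * E)) (Ici 0) :=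
    strictMonoOn_g.monotoneOn.comp (fun _ _ _ _ hst => by gcongr)
      fun t (ht : 0 ≤ t) => mem_Ici.2 (by positivity)
  refine ⟨hmono.comp monotoneOn_ginv mapsTo_ginv, ?_⟩
  rcases ha.eq_or_lt with ha | ha
  · simp only [← ha, zero_mul, zero_add]
    exact convexOn_const _ (convex_Ici 0)
  · exact convexOn_comp_ginv (continuous_g.comp (by fun_prop)).continuousOn
      (fun _ ht => hasDerivAt_g_affine (by positivity))
      (monotoneOn_gDeriv_affine_div_gDeriv ha hc)
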